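/- (Completeness of the m.p. scheme.) Let h be a multivalued refinement of a Boolean model f, and suppose there is an asynchronous trajectory from x to y in the dynamics of h. Then for any m.p. state x̂ compatible with x there is a trajectory in the m.p. dynamics of f from x̂ to some m.p. state ŷ compatible with y. -/

import Mathlib

/-- Activity levels of the most permissive scheme: 0, 1, increasing, decreasing. -/
inductive MPLevel : Type
  | zero | one | inc | dec
deriving DecidableEq

/-- The set γ(x̂) of Boolean states compatible with an m.p. state x̂. -/
def mpGamma {n : ℕ} (x : Fin n → MPLevel) : Set (Fin n → Bool) :=
  {x' | ∀ j, (x j = MPLevel.zero → x' j = false) ∧ (x j = MPLevel.one → x' j = true)}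

/-- The set α(x) of Boolean states compatible with a multivalued state x. -/
def mvAlpha {n : ℕ} (m x : Fin n → ℕ) : Set (Fin n → Bool) :=
  {x' | ∀ j, (x j = 0 → x' j = false) ∧ (x j = m j → x' j = true)}

/-- Coordinatewise embedding of Boolean states into m.p. states. -/
def embBM {n : ℕ} (x : Fin n → Bool) : Fin n → MPLevel :=
  fun j => if x j then MPLevel.one else MPLevel.zero

/-- Embedding of a Boolean state into X = ∏ {0,…,m_j}, sending 1 to m_j. -/
def embX {n : ℕ} (m : Fin n → ℕ) (x : Fin n → Bool) : Fin n → ℕ :=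
  fun j => if x j then m j else 0

/-- Transition of the most permissive dynamics of f at coordinate j0. -/
def mpTransAt {n : ℕ} (f : (Fin n → Bool) → Fin n → Bool) (j0 : Fin n)
    (x y : Fin n → MPLevel) : Prop :=
  (∀ j, j ≠ j0 → y j = x j) ∧
    (((x j0 = MPLevel.zero ∨ x j0 = MPLevel.dec) ∧ (∃ x' ∈ mpGamma x, f x' j0 = true) ∧ y j0 = MPLevel.inc) ∨
     ((x j0 = MPLevel.one ∨ x j0 = MPLevel.inc) ∧ (∃ x' ∈ mpGamma x, f x' j0 = false) ∧ y j0 = MPLevel.dec) ∨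
     (x j0 = MPLevel.inc ∧ y j0 = MPLevel.one) ∨
     (x j0 = MPLevel.dec ∧ y j0 = MPLevel.zero))

/-- Transition of the most permissive dynamics of f. -/
def mpTrans {n : ℕ} (f : (Fin n → Bool) → Fin n → Bool) (x y : Fin n → MPLevel) : Prop :=
  ∃ j0, mpTransAt f j0 x y

/-- Transition of the partial J-most-permissive dynamics of f at coordinate j0. -/
def pmpTransAt {n : ℕ} (J : Set (Fin n)) (f : (Fin n → Bool) → Fin n → Bool) (j0 : Fin n)
    (x y : Fin n → MPLevel) : Prop :=
  (∀ j, j ≠ j0 → y j = x j) ∧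
    (((x j0 = MPLevel.zero ∨ x j0 = MPLevel.dec) ∧ (∃ x' ∈ mpGamma x, f x' j0 = true) ∧ y j0 = MPLevel.inc) ∨
     ((x j0 = MPLevel.one ∨ x j0 = MPLevel.inc) ∧ (∃ x' ∈ mpGamma x, f x' j0 = false) ∧ y j0 = MPLevel.dec) ∨
     (x j0 = MPLevel.inc ∧ y j0 = MPLevel.one) ∨
     (x j0 = MPLevel.dec ∧ y j0 = MPLevel.zero) ∨
     (j0 ∉ J ∧ x j0 = MPLevel.zero ∧ (∃ x' ∈ mpGamma x, f x' j0 = true) ∧ y j0 = MPLevel.one) ∨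
     (j0 ∉ J ∧ x j0 = MPLevel.one ∧ (∃ x' ∈ mpGamma x, f x' j0 = false) ∧ y j0 = MPLevel.zero))

/-- Transition of the partial J-most-permissive dynamics of f. -/
def pmpTrans {n : ℕ} (J : Set (Fin n)) (f : (Fin n → Bool) → Fin n → Bool)
    (x y : Fin n → MPLevel) : Prop :=
  ∃ j0, pmpTransAt J f j0 x y

/-- A state of X_{J m.p.}: coordinates outside J are Boolean. -/
def inXJ {n : ℕ} (J : Set (Fin n)) (x : Fin n → MPLevel) : Prop :=
  ∀ j, j ∉ J → (x j = MPLevel.zero ∨ x j = MPLevel.one)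

/-- Asynchronous transition of a Boolean model f. -/
def asyncTransB {n : ℕ} (f : (Fin n → Bool) → Fin n → Bool) (x y : Fin n → Bool) : Prop :=
  ∃ j0, f x j0 ≠ x j0 ∧ y j0 = f x j0 ∧ ∀ j, j ≠ j0 → y j = x j

/-- Asynchronous transition of a multivalued model h (one coordinate moves by 1 toward its target). -/
def asyncTrans {n : ℕ} (h : (Fin n → ℕ) → Fin n → ℕ) (x y : Fin n → ℕ) : Prop :=
  ∃ j0, h x j0 ≠ x j0 ∧ (∀ j, j ≠ j0 → y j = x j) ∧
    ((x j0 < h x j0 ∧ y j0 = x j0 + 1) ∨ (h x j0 < x j0 ∧ y j0 = x j0 - 1))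

/-- An m.p. state x̂ is compatible with a multivalued state x. -/
def mpCompat {n : ℕ} (m x : Fin n → ℕ) (xh : Fin n → MPLevel) : Prop :=
  ∀ j, (x j = 0 → xh j = MPLevel.zero) ∧ (x j = m j → xh j = MPLevel.one) ∧
    (0 < x j → x j < m j → (xh j = MPLevel.inc ∨ xh j = MPLevel.dec))

/-- h is a multivalued model on X = ∏ {0,…,m_j}: maps X to X, moving each coordinate by at most 1. -/
def isMVModel {n : ℕ} (m : Fin n → ℕ) (h : (Fin n → ℕ) → Fin n → ℕ) : Prop :=
  ∀ x, (∀ j, x j ≤ m j) → ∀ j, h x j ≤ m j ∧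
    (h x j = x j ∨ h x j = x j + 1 ∨ h x j + 1 = x j)

/-- h is a multivalued refinement of the Boolean model f. -/
def isRefinement {n : ℕ} (m : Fin n → ℕ) (f : (Fin n → Bool) → Fin n → Bool)
    (h : (Fin n → ℕ) → Fin n → ℕ) : Prop :=
  ∀ x, (∀ j, x j ≤ m j) → ∀ j,
    (h x j < x j → ∃ x' ∈ mvAlpha m x, f x' j = false ∧ x' j = true) ∧
    (x j < h x j → ∃ x' ∈ mvAlpha m x, f x' j = true ∧ x' j = false)

/-- A literal in a DNF: a regulator index, a polarity, and a threshold (used in the multivalued reading). -/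
structure Lit (n : ℕ) where
  idx : Fin n
  pos : Bool
  thr : ℕ

/-- Boolean evaluation of a literal (threshold ignored). -/
def evalLitB {n : ℕ} (x : Fin n → Bool) (l : Lit n) : Bool :=
  if l.pos then x l.idx else !(x l.idx)

/-- Multivalued evaluation of a literal: x_idx ≥ thr+1 for a positive literal, x_idx < thr+1 otherwise. -/
def evalLitM {n : ℕ} (x : Fin n → ℕ) (l : Lit n) : Bool :=
  if l.pos then decide (l.thr + 1 ≤ x l.idx) else decide (x l.idx < l.thr + 1)

/-- Boolean evaluation of a DNF (list of conjunctive clauses). -/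
def evalDNFB {n : ℕ} (x : Fin n → Bool) (φ : List (List (Lit n))) : Bool :=
  φ.any fun c => c.all (evalLitB x)

/-- Multivalued evaluation of a DNF via the thresholds. -/
def evalDNFM {n : ℕ} (x : Fin n → ℕ) (φ : List (List (Lit n))) : Bool :=
  φ.any fun c => c.all (evalLitM x)

/-- Refinement built from the DNF threshold parameterisation:
h_j(x) = max(0, min(m_j, x_j + H_j(x))) with H_j(x) = +1 iff the multivalued DNF of f_j is true. -/
def hDNF {n : ℕ} (m : Fin n → ℕ) (φ : Fin n → List (List (Lit n)))
    (x : Fin n → ℕ) : Fin n → ℕ :=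
  fun j => if evalDNFM x (φ j) then min (m j) (x j + 1) else x j - 1

/-! An increasing step of `h` at coordinate `j` is justified, by the refinement property, by a
Boolean state `x' ∈ α(x) ⊆ γ(x̂)` with `f x' j = 1` and `x' j = 0`. In the m.p. dynamics this
witness lets `x̂ j` become `inc` (and then `one` if `x j` reaches `m j`); decreasing steps are
symmetric. The same witness shows `x j < m j`, so trajectories of `h` stay inside `X`, and the
theorem follows by induction along the trajectory. -/

theorem Relation.ReflTransGen.exists_of_simulation {α β : Type*} {r : α → α → Prop}
    {s : β → β → Prop} (e : α → β → Prop)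
    (hsim : ∀ a b c, r a b → e a c → ∃ d, e b d ∧ Relation.ReflTransGen s c d)
    {a b : α} {c : β} (hab : Relation.ReflTransGen r a b) (hac : e a c) :
    ∃ d, e b d ∧ Relation.ReflTransGen s c d := by
  induction hab with
  | refl => exact ⟨c, hac, .refl⟩
  | tail _ hbc ih =>
    obtain ⟨d, hbd, hcd⟩ := ih
    obtain ⟨d', hcd', hdd'⟩ := hsim _ _ d hbc hbd
    exact ⟨d', hcd', hcd.trans hdd'⟩

open MPLevel Relation

section Compat

variable {n : ℕ} {m x y : Fin n → ℕ} {xh : Fin n → MPLevel}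

theorem mvAlpha_subset_mpGamma (hx : ∀ j, x j ≤ m j) (hc : mpCompat m x xh) :
    mvAlpha m x ⊆ mpGamma xh := by
  intro x' hx' j
  obtain ⟨h0, h1, hmid⟩ := hc j
  rcases Nat.eq_zero_or_pos (x j) with hz | hpos
  · simp [h0 hz, (hx' j).1 hz]
  rcases (hx j).lt_or_eq with hlt | heq
  · rcases hmid hpos hlt with h | h <;> simp [h]
  · simp [h1 heq, (hx' j).2 heq]

theorem mpCompat_update {j0 : Fin n} {L : MPLevel} (hc : mpCompat m x xh)
    (hoff : ∀ j, j ≠ j0 → y j = x j) (h0 : y j0 = 0 → L = zero) (h1 : y j0 = m j0 → L = one)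
    (hmid : 0 < y j0 → y j0 < m j0 → L = inc ∨ L = dec) :
    mpCompat m y (Function.update xh j0 L) := by
  intro j
  by_cases hj : j = j0
  · subst hj
    simpa using ⟨h0, h1, hmid⟩
  · rw [Function.update_of_ne hj, hoff j hj]
    exact hc j

end Compat

section Reach

variable {n : ℕ} {f : (Fin n → Bool) → Fin n → Bool} {xh : Fin n → MPLevel} {j0 : Fin n}
  {x' : Fin n → Bool}

theorem mpTrans_update (L : MPLevel)
    (hL : ((xh j0 = zero ∨ xh j0 = dec) ∧ (∃ x' ∈ mpGamma xh, f x' j0 = true) ∧ L = inc) ∨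
      ((xh j0 = one ∨ xh j0 = inc) ∧ (∃ x' ∈ mpGamma xh, f x' j0 = false) ∧ L = dec) ∨
      (xh j0 = inc ∧ L = one) ∨ (xh j0 = dec ∧ L = zero)) :
    mpTrans f xh (Function.update xh j0 L) :=
  ⟨j0, fun _ hj => Function.update_of_ne hj _ _, by simpa using hL⟩

theorem reflTransGen_mpTrans_update_inc (hne : xh j0 ≠ one) (hγ : x' ∈ mpGamma xh)
    (hf : f x' j0 = true) : ReflTransGen (mpTrans f) xh (Function.update xh j0 inc) := by
  cases hj : xh j0
  · exact .single (mpTrans_update inc (Or.inl ⟨Or.inl hj, ⟨x', hγ, hf⟩, rfl⟩))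
  · exact absurd hj hne
  · rw [← hj, Function.update_eq_self]
  · exact .single (mpTrans_update inc (Or.inl ⟨Or.inr hj, ⟨x', hγ, hf⟩, rfl⟩))

theorem reflTransGen_mpTrans_update_dec (hne : xh j0 ≠ zero) (hγ : x' ∈ mpGamma xh)
    (hf : f x' j0 = false) : ReflTransGen (mpTrans f) xh (Function.update xh j0 dec) := by
  cases hj : xh j0
  · exact absurd hj hne
  · exact .single (mpTrans_update dec (Or.inr (Or.inl ⟨Or.inl hj, ⟨x', hγ, hf⟩, rfl⟩)))
  · exact .single (mpTrans_update dec (Or.inr (Or.inl ⟨Or.inr hj, ⟨x', hγ, hf⟩, rfl⟩)))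
  · rw [← hj, Function.update_eq_self]

theorem reflTransGen_mpTrans_update_one (hne : xh j0 ≠ one) (hγ : x' ∈ mpGamma xh)
    (hf : f x' j0 = true) : ReflTransGen (mpTrans f) xh (Function.update xh j0 one) := by
  have hstep := mpTrans_update (f := f) (xh := Function.update xh j0 inc) (j0 := j0) one
    (Or.inr (Or.inr (Or.inl ⟨Function.update_self .., rfl⟩)))
  rw [Function.update_idem] at hstep
  exact (reflTransGen_mpTrans_update_inc hne hγ hf).tail hstep

theorem reflTransGen_mpTrans_update_zero (hne : xh j0 ≠ zero) (hγ : x' ∈ mpGamma xh)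
    (hf : f x' j0 = false) : ReflTransGen (mpTrans f) xh (Function.update xh j0 zero) := by
  have hstep := mpTrans_update (f := f) (xh := Function.update xh j0 dec) (j0 := j0) zero
    (Or.inr (Or.inr (Or.inr ⟨Function.update_self .., rfl⟩)))
  rw [Function.update_idem] at hstep
  exact (reflTransGen_mpTrans_update_dec hne hγ hf).tail hstep

end Reach

section Step

variable {n : ℕ} {f : (Fin n → Bool) → Fin n → Bool} {m : Fin n → ℕ}
  {h : (Fin n → ℕ) → Fin n → ℕ} {x y : Fin n → ℕ}

theorem asyncTrans.le_of_isRefinement (href : isRefinement m f h) (hx : ∀ j, x j ≤ m j)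
    (hxy : asyncTrans h x y) (j : Fin n) : y j ≤ m j := by
  obtain ⟨j0, -, hoff, ⟨hlt, hy⟩ | ⟨-, hy⟩⟩ := hxy
  · by_cases hj : j = j0
    · subst hj
      obtain ⟨x', hα, -, hx'⟩ := (href x hx j).2 hlt
      have hne : x j ≠ m j := fun heq => by simp [(hα j).2 heq] at hx'
      have := hx j
      omega
    · exact (hoff j hj).trans_le (hx j)
  · by_cases hj : j = j0
    · subst hj
      have := hx j
      omega
    · exact (hoff j hj).trans_le (hx j)

theorem asyncTrans.exists_mpCompat (href : isRefinement m f h) (hx : ∀ j, x j ≤ m j)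
    (hxy : asyncTrans h x y) {xh : Fin n → MPLevel} (hc : mpCompat m x xh) :
    ∃ yh, mpCompat m y yh ∧ ReflTransGen (mpTrans f) xh yh := by
  obtain ⟨j0, -, hoff, ⟨hlt, hy⟩ | ⟨hlt, hy⟩⟩ := hxy
  · obtain ⟨x', hα, hf, hx'⟩ := (href x hx j0).2 hlt
    have hγ := mvAlpha_subset_mpGamma hx hc hα
    have hne : xh j0 ≠ one := fun h1 => by simp [(hγ j0).2 h1] at hx'
    by_cases htop : y j0 = m j0
    · exact ⟨_, mpCompat_update hc hoff (fun h0 => absurd h0 (by omega)) (fun _ => rfl)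
        (fun _ h => absurd htop h.ne), reflTransGen_mpTrans_update_one hne hγ hf⟩
    · exact ⟨_, mpCompat_update hc hoff (fun h0 => absurd h0 (by omega)) (absurd · htop)
        (fun _ _ => Or.inl rfl), reflTransGen_mpTrans_update_inc hne hγ hf⟩
  · obtain ⟨x', hα, hf, hx'⟩ := (href x hx j0).1 hlt
    have hγ := mvAlpha_subset_mpGamma hx hc hα
    have hne : xh j0 ≠ zero := fun h0 => by simp [(hγ j0).1 h0] at hx'
    have hxm := hx j0
    by_cases hbot : y j0 = 0
    · exact ⟨_, mpCompat_update hc hoff (fun _ => rfl) (fun h1 => absurd h1 (by omega))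
        (fun h _ => absurd hbot h.ne'), reflTransGen_mpTrans_update_zero hne hγ hf⟩
    · exact ⟨_, mpCompat_update hc hoff (absurd · hbot) (fun h1 => absurd h1 (by omega))
        (fun _ _ => Or.inr rfl), reflTransGen_mpTrans_update_dec hne hγ hf⟩

end Step

theorem mp_completeness_general {n : ℕ} (f : (Fin n → Bool) → Fin n → Bool)
    (m : Fin n → ℕ)
    (h : (Fin n → ℕ) → Fin n → ℕ) (href : isRefinement m f h)
    (x y : Fin n → ℕ) (hx : ∀ j, x j ≤ m j)
    (ht : Relation.ReflTransGen (asyncTrans h) x y)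
    (xh : Fin n → MPLevel) (hc : mpCompat m x xh) :
    ∃ yh : Fin n → MPLevel, mpCompat m y yh ∧
      Relation.ReflTransGen (mpTrans f) xh yh := by
  obtain ⟨yh, ⟨-, hcy⟩, hreach⟩ :=
    ht.exists_of_simulation (fun x xh => (∀ j, x j ≤ m j) ∧ mpCompat m x xh)
      (fun _ _ _ hab ⟨ha, hac⟩ =>
        let ⟨d, hbd, hcd⟩ := hab.exists_mpCompat href ha hac
        ⟨d, ⟨hab.le_of_isRefinement href ha, hbd⟩, hcd⟩)
      ⟨hx, hc⟩
  exact ⟨yh, hcy, hreach⟩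

/-- completeness of the m.p. scheme: if there is an asynchronous trajectory
from x to y in a refinement h of f, then from any m.p. state x̂ compatible with x there is a
trajectory in the m.p. dynamics of f to some state ŷ compatible with y. -/
theorem mp_completeness {n : ℕ} (f : (Fin n → Bool) → Fin n → Bool)
    (m : Fin n → ℕ) (hm : ∀ j, 1 ≤ m j) (hex : ∃ j, 1 < m j)
    (h : (Fin n → ℕ) → Fin n → ℕ) (hmv : isMVModel m h) (href : isRefinement m f h)
    (x y : Fin n → ℕ) (hx : ∀ j, x j ≤ m j)
    (ht : Relation.ReflTransGen (asyncTrans h) x y)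
    (xh : Fin n → MPLevel) (hc : mpCompat m x xh) :
    ∃ yh : Fin n → MPLevel, mpCompat m y yh ∧
      Relation.ReflTransGen (mpTrans f) xh yh :=
  mp_completeness_general f m h href x y hx ht xh hc
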